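/- For every strictly increasing sequence α with α_n > 1 and α_n → ∞, the spectrum of the Cesàro operator C on Λ₀(α) is contained in the closed disc {λ ∈ ℂ : |λ − 1/2| ≤ 1/2}; that is, for every λ ∈ ℂ with |λ − 1/2| > 1/2, the operator λI − C is bijective on Λ₀(α) with continuous inverse. -/

import Mathlib

open Filter Finset Topology

noncomputable section

/-- The weight `w_k(n) = e^{-alpha_n / k}`.  Indices are shifted by one: the natural
numbers `k n : Nat` represent the indices `k+1` and `n+1` (both running from `1`). -/
def wt (a : ℕ → ℝ) (k n : ℕ) : ℝ := Real.exp (-(a n) / ((k : ℝ) + 1))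

/-- Membership in the power series space of finite type `Λ₀(α)`:
`x ∈ Λ₀(α)` iff `w_k(n)|x_n| → 0` for every `k ≥ 1`. -/
def memLambda (a : ℕ → ℝ) (x : ℕ → ℂ) : Prop :=
  ∀ k : ℕ, Tendsto (fun n => wt a k n * ‖x n‖) atTop (𝓝 0)

/-- The norm `p_k(x) = sup_n w_k(n)|x_n|` generating the Fréchet topology of `Λ₀(α)`. -/
def pk (a : ℕ → ℝ) (k : ℕ) (x : ℕ → ℂ) : ℝ := ⨆ n : ℕ, wt a k n * ‖x n‖

/-- The discrete Cesàro operator `(C x)_n = (x_1 + ⋯ + x_n)/n` (0-indexed). -/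
def cesaro (x : ℕ → ℂ) : ℕ → ℂ := fun n => (∑ i ∈ Finset.range (n + 1), x i) / ((n : ℂ) + 1)

/-- `lam` belongs to the resolvent set of the Cesàro operator on `Λ₀(α)`:
`lam • I - C` has a linear inverse `T` on `Λ₀(α)` which is continuous for the
Fréchet topology generated by the norms `p_k`. -/
def InResolvent (a : ℕ → ℝ) (lam : ℂ) : Prop :=
  ∃ T : (ℕ → ℂ) → (ℕ → ℂ),
    (∀ x, memLambda a x → memLambda a (T x)) ∧
    (∀ x y, memLambda a x → memLambda a y → T (x + y) = T x + T y) ∧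
    (∀ (c : ℂ) (x), memLambda a x → T (c • x) = c • T x) ∧
    (∀ k : ℕ, ∃ l : ℕ, ∃ M : ℝ, 0 < M ∧ ∀ x, memLambda a x → pk a k (T x) ≤ M * pk a l x) ∧
    (∀ x, memLambda a x → T (lam • x - cesaro x) = x) ∧
    (∀ x, memLambda a x → lam • T x - cesaro (T x) = x)

/-!
In terms of the partial sums `S n` of `x`, the equation `λx - Cx = y` is the first-order
recursion `(λ - 1/(n+1)) S (n+1) = λ S n + y n`, which inverts `λI - C` explicitly.
The condition `|λ - 1/2| > 1/2` says `Re(1/λ) < 1`; for `max (Re(1/λ)) 0 < c < 1` it gives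
`|λ| ≤ (1 + c/(n+1)) |λ - 1/(n+1)|` for large `n`, so `|S n| = O((n+1) E n)` whenever
`|y n| ≤ E n` for a nondecreasing weight `E`, and then `|x n| = O(E n)`.
With `E = 1/w_k` this is `p_k(x) ≤ C p_k(y)`, and the decay of `w_k / w_{k+1}` puts `x` in `Λ₀(α)`.
-/

section RecursiveBound

variable {u E : ℕ → ℝ} {A K : ℝ}

lemma le_mul_pow_mul_of_le_mul_add (hA : 0 ≤ A) (hK : 0 ≤ K) (hE : Monotone E)
    (hE0 : ∀ n, 0 ≤ E n) (hu0 : u 0 = 0) (hu : ∀ n, u (n + 1) ≤ A * u n + K * E n) (n : ℕ) :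
    u n ≤ K * (A + 1) ^ n * E n := by
  induction n with
  | zero => simpa [hu0] using mul_nonneg hK (hE0 0)
  | succ n ih =>
    have hpow : 1 ≤ (A + 1) ^ n := one_le_pow₀ (by linarith)
    have hEn : K * E n ≤ K * E (n + 1) := mul_le_mul_of_nonneg_left (hE n.le_succ) hK
    calc u (n + 1) ≤ A * (K * (A + 1) ^ n * E n) + K * E n :=
          (hu n).trans (by gcongr)
      _ ≤ A * (K * (A + 1) ^ n * E (n + 1)) + (A + 1) ^ n * (K * E (n + 1)) :=
          add_le_add (mul_le_mul_of_nonneg_left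
              (mul_le_mul_of_nonneg_left (hE n.le_succ) (by positivity)) hA)
            (hEn.trans (le_mul_of_one_le_left (mul_nonneg hK (hE0 _)) hpow))
      _ = K * (A + 1) ^ (n + 1) * E (n + 1) := by ring

lemma le_mul_succ_mul_of_le_mul_add {c : ℝ} {N : ℕ} (hA : 0 ≤ A) (hK : 0 ≤ K)
    (hE : Monotone E) (hE0 : ∀ n, 0 ≤ E n) (hc0 : 0 ≤ c) (hc1 : c < 1) (hu0 : u 0 = 0)
    (hu : ∀ n, u (n + 1) ≤ A * u n + K * E n)
    (hfine : ∀ n, N ≤ n → u (n + 1) ≤ (1 + c / (n + 1)) * u n + K * E n) (n : ℕ) :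
    u n ≤ max ((A + 1) ^ N) (1 - c)⁻¹ * K * (n + 1) * E n := by
  set M := max ((A + 1) ^ N) (1 - c)⁻¹
  have hM0 : 0 < M := (inv_pos.mpr (sub_pos.mpr hc1)).trans_le (le_max_right _ _)
  have hM : 1 ≤ M * (1 - c) :=
    calc 1 = (1 - c)⁻¹ * (1 - c) := (inv_mul_cancel₀ (sub_pos.mpr hc1).ne').symm
      _ ≤ M * (1 - c) := mul_le_mul_of_nonneg_right (le_max_right _ _) (by linarith)
  have hKE : ∀ n, 0 ≤ K * E n := fun n => mul_nonneg hK (hE0 n)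
  induction n with
  | zero =>
    rw [hu0, Nat.cast_zero, zero_add, mul_one]
    exact mul_nonneg (mul_nonneg hM0.le hK) (hE0 0)
  | succ n ih =>
    rcases lt_or_ge n N with hn | hn
    · have hpow : (A + 1) ^ (n + 1) ≤ M :=
        (pow_le_pow_right₀ (by linarith) hn).trans (le_max_left _ _)
      calc u (n + 1) ≤ K * (A + 1) ^ (n + 1) * E (n + 1) :=
            le_mul_pow_mul_of_le_mul_add hA hK hE hE0 hu0 hu _
        _ = (A + 1) ^ (n + 1) * 1 * (K * E (n + 1)) := by ring
        _ ≤ M * (n + 1 + 1) * (K * E (n + 1)) :=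
            mul_le_mul_of_nonneg_right (mul_le_mul hpow (by linarith) zero_le_one hM0.le) (hKE _)
        _ = _ := by push_cast; ring
    · have hEn : K * E n ≤ K * E (n + 1) := mul_le_mul_of_nonneg_left (hE n.le_succ) hK
      calc u (n + 1) ≤ (1 + c / (n + 1)) * (M * K * (n + 1) * E n) + K * E n :=
            (hfine n hn).trans (by gcongr)
        _ = M * (n + 1 + c) * (K * E n) + 1 * (K * E n) := by field_simp
        _ ≤ M * (n + 1 + c) * (K * E (n + 1)) + M * (1 - c) * (K * E (n + 1)) := by
            gcongr
            exact hKE n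
        _ = _ := by push_cast; ring

end RecursiveBound

section ComplexEstimates

lemma inv_re_lt_one_of_half_lt_norm_sub_half {lam : ℂ} (hlam : 1 / 2 < ‖lam - 1 / 2‖) :
    (lam⁻¹).re < 1 := by
  rcases eq_or_ne lam 0 with rfl | hne
  · simp
  have hsq : (1 / 2 : ℝ) ^ 2 < Complex.normSq (lam - 1 / 2) := by
    rw [Complex.normSq_eq_norm_sq]; gcongr
  have hexp : Complex.normSq (lam - 1 / 2) = Complex.normSq lam - lam.re + 1 / 4 := by
    simp [Complex.normSq_apply]; ring
  rw [Complex.inv_re, div_lt_one (Complex.normSq_pos.mpr hne)]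
  linarith

lemma sub_half_le_norm_sub_ofReal (lam : ℂ) {t : ℝ} (ht0 : 0 ≤ t) (ht1 : t ≤ 1) :
    ‖lam - 1 / 2‖ - 1 / 2 ≤ ‖lam - t‖ := by
  have ht : ‖(t : ℂ) - 1 / 2‖ ≤ 1 / 2 := by
    rw [show (t : ℂ) - 1 / 2 = ((t - 1 / 2 : ℝ) : ℂ) by push_cast; rfl, Complex.norm_real,
      Real.norm_eq_abs, abs_le]
    constructor <;> linarith
  have := norm_sub_le_norm_sub_add_norm_sub lam (t : ℂ) (1 / 2)
  linarith

lemma sub_half_le_norm_sub_inv_succ (lam : ℂ) (n : ℕ) :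
    ‖lam - 1 / 2‖ - 1 / 2 ≤ ‖lam - 1 / ((n : ℂ) + 1)‖ := by
  have h := sub_half_le_norm_sub_ofReal lam (t := 1 / ((n : ℝ) + 1)) (by positivity)
    ((div_le_one (by positivity)).mpr (by simp))
  push_cast at h
  exact h

lemma sub_one_div_succ_ne_zero {lam : ℂ} (hlam : 1 / 2 < ‖lam - 1 / 2‖) (n : ℕ) :
    lam - 1 / ((n : ℂ) + 1) ≠ 0 :=
  norm_pos_iff.mp ((sub_pos.mpr hlam).trans_le (sub_half_le_norm_sub_inv_succ lam n))

/-- Since `λ - t = λ (1 - t λ⁻¹)` and `‖1 - t λ⁻¹‖ ≥ 1 - t Re λ⁻¹`, this is the inequality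
`(1 + c t)(1 - t Re λ⁻¹) ≥ 1`. -/
lemma norm_le_one_add_mul_mul_norm_sub {lam : ℂ} {t c : ℝ} (ht : 0 ≤ t) (hc0 : 0 ≤ c)
    (hc1 : c ≤ 1) (htc : t ≤ c - (lam⁻¹).re) : ‖lam‖ ≤ (1 + c * t) * ‖lam - t‖ := by
  rcases eq_or_ne lam 0 with rfl | hne
  · simp only [norm_zero]; positivity
  set b := (lam⁻¹).re
  have hfac : lam - t = lam * (1 - t * lam⁻¹) := by field_simp
  have hre : 1 - t * b ≤ ‖1 - t * lam⁻¹‖ := by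
    calc 1 - t * b = (1 - t * lam⁻¹).re := by simp [b]
      _ ≤ _ := Complex.re_le_norm _
  have hbc : b * c ≤ 1 := by
    rcases le_or_gt b 0 with hb | hb <;> nlinarith
  have hone : 1 ≤ (1 + c * t) * (1 - t * b) := by nlinarith [mul_le_mul_of_nonneg_left hbc ht]
  calc ‖lam‖ = ‖lam‖ * 1 := (mul_one _).symm
    _ ≤ ‖lam‖ * ((1 + c * t) * ‖1 - t * lam⁻¹‖) := by gcongr; exact hone.trans (by gcongr)
    _ = (1 + c * t) * ‖lam - t‖ := by rw [hfac, norm_mul]; ring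

end ComplexEstimates

section Resolvent

/-- The partial sums `S n = x 0 + ⋯ + x (n - 1)` of the solution of `lam • x - cesaro x = y`;
in terms of `S`, that equation at index `n` reads
`(lam - 1 / (n + 1)) S (n + 1) = lam S n + y n`. -/
def resolventPartialSum (lam : ℂ) (y : ℕ → ℂ) : ℕ → ℂ
  | 0 => 0
  | n + 1 => (lam * resolventPartialSum lam y n + y n) / (lam - 1 / ((n : ℂ) + 1))

def cesaroResolvent (lam : ℂ) (y : ℕ → ℂ) (n : ℕ) : ℂ :=
  resolventPartialSum lam y (n + 1) - resolventPartialSum lam y n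

variable {lam : ℂ}

lemma resolventPartialSum_add (x y : ℕ → ℂ) (n : ℕ) :
    resolventPartialSum lam (x + y) n =
      resolventPartialSum lam x n + resolventPartialSum lam y n := by
  induction n with
  | zero => simp [resolventPartialSum]
  | succ n ih => simp only [resolventPartialSum, ih, Pi.add_apply]; ring

lemma resolventPartialSum_smul (c : ℂ) (y : ℕ → ℂ) (n : ℕ) :
    resolventPartialSum lam (c • y) n = c * resolventPartialSum lam y n := by
  induction n with
  | zero => simp [resolventPartialSum]
  | succ n ih => simp only [resolventPartialSum, ih, Pi.smul_apply, smul_eq_mul]; ring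

lemma cesaroResolvent_add (x y : ℕ → ℂ) :
    cesaroResolvent lam (x + y) = cesaroResolvent lam x + cesaroResolvent lam y := by
  ext n; simp only [cesaroResolvent, resolventPartialSum_add, Pi.add_apply]; ring

lemma cesaroResolvent_smul (c : ℂ) (y : ℕ → ℂ) :
    cesaroResolvent lam (c • y) = c • cesaroResolvent lam y := by
  ext n; simp only [cesaroResolvent, resolventPartialSum_smul, Pi.smul_apply, smul_eq_mul]; ring

lemma sum_range_cesaroResolvent (y : ℕ → ℂ) (n : ℕ) :
    ∑ i ∈ range n, cesaroResolvent lam y i = resolventPartialSum lam y n :=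
  (Finset.sum_range_sub (resolventPartialSum lam y) n).trans (sub_zero _)

variable (hlam : ∀ n : ℕ, lam - 1 / ((n : ℂ) + 1) ≠ 0)
include hlam

lemma resolventPartialSum_succ_mul (y : ℕ → ℂ) (n : ℕ) :
    resolventPartialSum lam y (n + 1) * (lam - 1 / ((n : ℂ) + 1)) =
      lam * resolventPartialSum lam y n + y n :=
  div_mul_cancel₀ _ (hlam n)

lemma resolventPartialSum_smul_sub_cesaro (x : ℕ → ℂ) (n : ℕ) :
    resolventPartialSum lam (lam • x - cesaro x) n = ∑ i ∈ range n, x i := by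
  induction n with
  | zero => simp [resolventPartialSum]
  | succ n ih =>
    rw [resolventPartialSum, ih, div_eq_iff (hlam n), sum_range_succ]
    simp only [cesaro, Pi.sub_apply, Pi.smul_apply, smul_eq_mul, sum_range_succ]
    field_simp
    ring

lemma cesaroResolvent_smul_sub_cesaro (x : ℕ → ℂ) :
    cesaroResolvent lam (lam • x - cesaro x) = x := by
  ext n
  simp [cesaroResolvent, resolventPartialSum_smul_sub_cesaro hlam, sum_range_succ]

lemma smul_cesaroResolvent_sub_cesaro (y : ℕ → ℂ) :
    lam • cesaroResolvent lam y - cesaro (cesaroResolvent lam y) = y := by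
  ext n
  simp only [Pi.sub_apply, Pi.smul_apply, smul_eq_mul, cesaro, sum_range_cesaroResolvent]
  have hn : ((n : ℂ) + 1) ≠ 0 := Nat.cast_add_one_ne_zero n
  have key := resolventPartialSum_succ_mul hlam y n
  field_simp at key ⊢
  simp only [cesaroResolvent]
  linear_combination key

lemma cesaroResolvent_eq (y : ℕ → ℂ) (n : ℕ) :
    cesaroResolvent lam y n =
      (resolventPartialSum lam y n / ((n : ℂ) + 1) + y n) / (lam - 1 / ((n : ℂ) + 1)) := by
  rw [eq_div_iff (hlam n), cesaroResolvent, sub_mul, resolventPartialSum_succ_mul hlam]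
  ring

end Resolvent

section ResolventEstimates

variable {lam : ℂ}

lemma norm_resolventPartialSum_succ_le (y : ℕ → ℂ) (n : ℕ) :
    ‖resolventPartialSum lam y (n + 1)‖ ≤
      (‖lam‖ * ‖resolventPartialSum lam y n‖ + ‖y n‖) / ‖lam - 1 / ((n : ℂ) + 1)‖ := by
  rw [resolventPartialSum, norm_div, ← norm_mul]
  gcongr
  exact norm_add_le _ _

lemma norm_resolventPartialSum_le {δ c : ℝ} {N : ℕ} (hδ : 0 < δ) (hc0 : 0 ≤ c) (hc1 : c < 1)
    (hδle : ∀ n : ℕ, δ ≤ ‖lam - 1 / ((n : ℂ) + 1)‖)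
    (hfine : ∀ n : ℕ, N ≤ n → ‖lam‖ ≤ (1 + c / (n + 1)) * ‖lam - 1 / ((n : ℂ) + 1)‖)
    {B : ℝ} {E : ℕ → ℝ} {y : ℕ → ℂ} (hB : 0 ≤ B) (hE : Monotone E) (hE0 : ∀ n, 0 ≤ E n)
    (hy : ∀ n, ‖y n‖ ≤ B * E n) (n : ℕ) :
    ‖resolventPartialSum lam y n‖ ≤
      max ((‖lam‖ / δ + 1) ^ N) (1 - c)⁻¹ * (B / δ) * (n + 1) * E n := by
  have hpos : ∀ n : ℕ, 0 < ‖lam - 1 / ((n : ℂ) + 1)‖ := fun n => hδ.trans_le (hδle n)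
  refine le_mul_succ_mul_of_le_mul_add (u := fun n => ‖resolventPartialSum lam y n‖)
    (by positivity) (by positivity) hE hE0 hc0 hc1 (by simp [resolventPartialSum])
    (fun n => ?_) (fun n hn => ?_) n
  · calc _ ≤ _ := norm_resolventPartialSum_succ_le y n
      _ ≤ (‖lam‖ * ‖resolventPartialSum lam y n‖ + B * E n) / δ :=
          div_le_div₀ (add_nonneg (by positivity) (mul_nonneg hB (hE0 n)))
            (by gcongr; exact hy n) hδ (hδle n)
      _ = _ := by ring
  · calc _ ≤ _ := norm_resolventPartialSum_succ_le y n
      _ = ‖lam‖ / ‖lam - 1 / ((n : ℂ) + 1)‖ * ‖resolventPartialSum lam y n‖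
            + ‖y n‖ / ‖lam - 1 / ((n : ℂ) + 1)‖ := by ring
      _ ≤ (1 + c / (n + 1)) * ‖resolventPartialSum lam y n‖ + B / δ * E n := by
          gcongr
          · exact (div_le_iff₀ (hpos n)).mpr (hfine n hn)
          · rw [div_mul_eq_mul_div]
            exact div_le_div₀ (mul_nonneg hB (hE0 n)) (hy n) hδ (hδle n)

theorem exists_norm_cesaroResolvent_le (hlam : 1 / 2 < ‖lam - 1 / 2‖) :
    ∃ C > 0, ∀ (B : ℝ) (E : ℕ → ℝ) (y : ℕ → ℂ), 0 ≤ B → Monotone E → (∀ n, 0 ≤ E n) →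
      (∀ n, ‖y n‖ ≤ B * E n) → ∀ n, ‖cesaroResolvent lam y n‖ ≤ C * B * E n := by
  set δ := ‖lam - 1 / 2‖ - 1 / 2
  have hδ : 0 < δ := sub_pos.mpr hlam
  have hδle : ∀ n : ℕ, δ ≤ ‖lam - 1 / ((n : ℂ) + 1)‖ := sub_half_le_norm_sub_inv_succ lam
  set b := (lam⁻¹).re
  have hb : b < 1 := inv_re_lt_one_of_half_lt_norm_sub_half hlam
  obtain ⟨c, hbc, hc0, hc1⟩ : ∃ c, b < c ∧ 0 ≤ c ∧ c < 1 := by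
    refine ⟨(1 + max b 0) / 2, ?_, ?_, ?_⟩ <;>
      linarith [le_max_left b 0, le_max_right b 0, max_lt hb one_pos]
  obtain ⟨N, hN⟩ := exists_nat_one_div_lt (sub_pos.mpr hbc)
  have hfine : ∀ n : ℕ, N ≤ n → ‖lam‖ ≤ (1 + c / (n + 1)) * ‖lam - 1 / ((n : ℂ) + 1)‖ := by
    intro n hn
    have ht : 1 / ((n : ℝ) + 1) ≤ c - b :=
      (Nat.one_div_le_one_div hn).trans hN.le
    have := norm_le_one_add_mul_mul_norm_sub (lam := lam) (by positivity) hc0 hc1.le ht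
    push_cast at this
    rwa [mul_one_div] at this
  set M := max ((‖lam‖ / δ + 1) ^ N) (1 - c)⁻¹
  have hM : 0 < M := (inv_pos.mpr (sub_pos.mpr hc1)).trans_le (le_max_right _ _)
  refine ⟨(M / δ + 1) / δ, by positivity, fun B E y hB hE hE0 hy n => ?_⟩
  have hS := norm_resolventPartialSum_le hδ hc0 hc1 hδle hfine hB hE hE0 hy n
  have hnorm : ‖(n : ℂ) + 1‖ = n + 1 := by norm_cast
  rw [cesaroResolvent_eq (sub_one_div_succ_ne_zero hlam), norm_div]
  calc _ ≤ (‖resolventPartialSum lam y n‖ / (n + 1) + B * E n) / δ := by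
        refine div_le_div₀ (add_nonneg (by positivity) (mul_nonneg hB (hE0 n))) ?_ hδ (hδle n)
        exact (norm_add_le _ _).trans (add_le_add (by rw [norm_div, hnorm]) (hy n))
    _ ≤ (M * (B / δ) * E n + B * E n) / δ := by
        gcongr
        rw [div_le_iff₀ (by positivity)]
        linarith
    _ = (M / δ + 1) / δ * B * E n := by ring

end ResolventEstimates

section PowerSeriesSpace

variable {a : ℕ → ℝ}

lemma wt_pos (a : ℕ → ℝ) (k n : ℕ) : 0 < wt a k n := Real.exp_pos _

lemma monotone_inv_wt (ha : Monotone a) (k : ℕ) : Monotone fun n => (wt a k n)⁻¹ := by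
  intro m n hmn
  simp only [wt, ← Real.exp_neg, neg_div, neg_neg]
  gcongr
  exact ha hmn

lemma norm_le_pk_mul_inv_wt {x : ℕ → ℂ} (hx : memLambda a x) (k n : ℕ) :
    ‖x n‖ ≤ pk a k x * (wt a k n)⁻¹ := by
  rw [← div_eq_mul_inv, le_div_iff₀ (wt_pos a k n), mul_comm]
  exact le_ciSup (hx k).bddAbove_range n

lemma tendsto_wt_div_wt_succ (htop : Tendsto a atTop atTop) (k : ℕ) :
    Tendsto (fun n => wt a k n / wt a (k + 1) n) atTop (𝓝 0) := by
  have hexp : ∀ n, wt a k n / wt a (k + 1) n = Real.exp (a n * -(1 / ((k + 1) * (k + 2)))) := by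
    intro n
    rw [wt, wt, ← Real.exp_sub]
    congr 1
    push_cast
    field_simp
    ring
  simp only [hexp]
  exact Real.tendsto_exp_atBot.comp (htop.atTop_mul_const_of_neg (by simp; positivity))

lemma pk_nonneg (a : ℕ → ℝ) (k : ℕ) (x : ℕ → ℂ) : 0 ≤ pk a k x :=
  Real.iSup_nonneg fun n => mul_nonneg (wt_pos a k n).le (norm_nonneg _)

lemma tendsto_wt_mul_norm_of_wt_succ_mul_norm_le (htop : Tendsto a atTop atTop) {x : ℕ → ℂ}
    {k : ℕ} {B : ℝ} (hx : ∀ n, wt a (k + 1) n * ‖x n‖ ≤ B) :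
    Tendsto (fun n => wt a k n * ‖x n‖) atTop (𝓝 0) := by
  refine squeeze_zero (fun n => mul_nonneg (wt_pos a k n).le (norm_nonneg _)) (fun n => ?_)
    (by simpa using (tendsto_wt_div_wt_succ htop k).mul_const B)
  calc wt a k n * ‖x n‖ = wt a k n / wt a (k + 1) n * (wt a (k + 1) n * ‖x n‖) := by
        field_simp [(wt_pos a (k + 1) n).ne']
    _ ≤ wt a k n / wt a (k + 1) n * B := by
        gcongr
        · exact div_nonneg (wt_pos a k n).le (wt_pos a (k + 1) n).le
        · exact hx n

end PowerSeriesSpace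

theorem stmt15_general (a : ℕ → ℝ) (hmono : StrictMono a)
    (htop : Tendsto a atTop atTop) :
    ∀ lam : ℂ, 1 / 2 < ‖lam - 1 / 2‖ → InResolvent a lam := by
  intro lam hlam
  have hne := sub_one_div_succ_ne_zero hlam
  obtain ⟨C, hC, hT⟩ := exists_norm_cesaroResolvent_le hlam
  have hwT : ∀ k y, memLambda a y → ∀ n, wt a k n * ‖cesaroResolvent lam y n‖ ≤ C * pk a k y := by
    intro k y hy n
    rw [← le_div_iff₀' (wt_pos a k n), div_eq_mul_inv]
    exact hT _ _ y (pk_nonneg a k y) (monotone_inv_wt hmono.monotone k)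
      (fun n => (inv_pos.mpr (wt_pos a k n)).le) (norm_le_pk_mul_inv_wt hy k) n
  exact ⟨cesaroResolvent lam,
    fun y hy k => tendsto_wt_mul_norm_of_wt_succ_mul_norm_le htop (hwT (k + 1) y hy),
    fun x y _ _ => cesaroResolvent_add x y,
    fun c x _ => cesaroResolvent_smul c x,
    fun k => ⟨k, C, hC, fun y hy => ciSup_le (hwT k y hy)⟩,
    fun x _ => cesaroResolvent_smul_sub_cesaro hne x,
    fun y _ => smul_cesaroResolvent_sub_cesaro hne y⟩

/-- for every `α`, the spectrum of `C` on `Λ₀(α)` is contained in the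
closed disc `{λ : |λ - 1/2| ≤ 1/2}`: every `λ` with `|λ - 1/2| > 1/2` belongs to the
resolvent set. -/
theorem stmt15 (a : ℕ → ℝ) (hmono : StrictMono a) (h1 : ∀ n, 1 < a n)
    (htop : Tendsto a atTop atTop) :
    ∀ lam : ℂ, 1 / 2 < ‖lam - 1 / 2‖ → InResolvent a lam :=
  stmt15_general a hmono htop
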